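/- With notation of Lemma 's1': on S¹(8) with p_T the periodized odd function, the harmonic representatives for d_{p_T}-cohomology are e^{-p_T} (degree 0) and e^{p_T} ds (degree 1); moreover ∫_{S¹(8)} e^{-2p_T} ds = ∫_{S¹(8)} e^{2p_T} ds, and consequently the ratio element ρ_T = [1] ⊗ [e^{2p_T}ds]^{-1} satisfies |τ(ρ_T)|_{RS,T} = 1, where the L²-metric on the determinant line uses the harmonic representatives' L² norms. -/

import Mathlib

/-- On `S¹(8)` (modeled as `[-2,6]` with endpoints identified) with the
periodized odd function `p = p_T` (built from an odd `f = f_T`: `p = f` on `[-2,2]`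
and `p(s) = f(4-s)` on `[2,6]`), the harmonic representatives of the
`d_p`-cohomology are `e^{-p}` in degree 0 (`d_p e^{-p} = 0`) and `e^{p} ds` in
degree 1 (`d_p^*(e^p ds) = -(e^p)' + p' e^p = 0`); moreover
`∫_{S¹(8)} e^{-2p} = ∫_{S¹(8)} e^{2p}`, and consequently the element
`ρ = [1] ⊗ [e^{2p}ds]^{-1}` satisfies `|τ(ρ)|_{RS,T} = ‖e^{-p}‖_{L²}/‖e^{p}ds‖_{L²} = 1`. -/
theorem stmt_18 (f p : ℝ → ℝ) (hf : ContDiff ℝ (⊤ : ℕ∞) f) (hp : ContDiff ℝ (⊤ : ℕ∞) p)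
    (hodd : ∀ s, f (-s) = - f s)
    (hp1 : ∀ s ∈ Set.Icc (-2:ℝ) 2, p s = f s)
    (hp2 : ∀ s ∈ Set.Icc (2:ℝ) 6, p s = f (4 - s))
    (hper : Function.Periodic p 8) :
    (∀ s, deriv (fun x => Real.exp (-p x)) s + deriv p s * Real.exp (-p s) = 0)
    ∧ (∀ s, -(deriv (fun x => Real.exp (p x)) s) + deriv p s * Real.exp (p s) = 0)
    ∧ (∫ s in (-2:ℝ)..6, Real.exp (-2 * p s)) = ∫ s in (-2:ℝ)..6, Real.exp (2 * p s)
    ∧ Real.sqrt (∫ s in (-2:ℝ)..6, Real.exp (-2 * p s)) /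
        Real.sqrt (∫ s in (-2:ℝ)..6, Real.exp (2 * p s)) = 1 := by
  have hpd : ∀ s, HasDerivAt p (deriv p s) s := fun s =>
    ((hp.differentiable (by simp)) s).hasDerivAt
  -- odd symmetry of p on [-2,6]
  have hpodd : ∀ s ∈ Set.Icc (-2:ℝ) 6, p (-s) = - p s := by
    intro s hs
    rcases le_or_gt s 2 with h2 | h2
    · have hs' : s ∈ Set.Icc (-2:ℝ) 2 := ⟨hs.1, h2⟩
      have hns : -s ∈ Set.Icc (-2:ℝ) 2 := ⟨by linarith [hs.1, h2], by linarith [hs.1]⟩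
      rw [hp1 _ hns, hodd, hp1 _ hs']
    · have hs' : s ∈ Set.Icc (2:ℝ) 6 := ⟨le_of_lt h2, hs.2⟩
      have h8 : p (-s + 8) = p (-s) := hper (-s)
      have h8s : -s + 8 ∈ Set.Icc (2:ℝ) 6 := ⟨by linarith [hs.2], by linarith⟩
      have : p (-s) = f (4 - (-s + 8)) := by rw [← h8, hp2 _ h8s]
      rw [this, hp2 _ hs']
      have : (4 : ℝ) - (-s + 8) = -(4 - s) := by ring
      rw [this, hodd]
  -- the main integral symmetry
  have hint : (∫ s in (-2:ℝ)..6, Real.exp (-2 * p s))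
      = ∫ s in (-2:ℝ)..6, Real.exp (2 * p s) := by
    have hper2 : Function.Periodic (fun s => Real.exp (2 * p s)) 8 := by
      intro x; simp [hper x]
    have h1 : (∫ s in (-2:ℝ)..6, Real.exp (2 * p s))
        = ∫ s in (-6:ℝ)..2, Real.exp (2 * p s) := by
      have := hper2.intervalIntegral_add_eq (-6 : ℝ) (-2 : ℝ)
      norm_num at this
      rw [this]
    have h2 : (∫ s in (-6:ℝ)..2, Real.exp (2 * p s))
        = ∫ s in (-6:ℝ)..2, Real.exp (-2 * p (-s)) := by
      apply intervalIntegral.integral_congr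
      intro x hx
      rw [Set.uIcc_of_le (by norm_num : (-6:ℝ) ≤ 2)] at hx
      have hx' := hpodd (-x) ⟨by linarith [hx.2], by linarith [hx.1]⟩
      rw [neg_neg] at hx'
      show Real.exp (2 * p x) = Real.exp (-2 * p (-x))
      rw [hx']
      ring_nf
    have h3 : (∫ s in (-6:ℝ)..2, Real.exp (-2 * p (-s)))
        = ∫ s in (-2:ℝ)..6, Real.exp (-2 * p s) := by
      have := intervalIntegral.integral_comp_neg (a := (-6:ℝ)) (b := 2)
        (f := fun s => Real.exp (-2 * p s))
      simpa using this
    rw [h1, h2, h3]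
  refine ⟨?_, ?_, hint, ?_⟩
  · intro s
    have h : HasDerivAt (fun x => Real.exp (-p x)) (Real.exp (-p s) * -deriv p s) s :=
      ((hpd s).neg).exp
    rw [h.deriv]
    ring
  · intro s
    have h := (hpd s).exp
    rw [h.deriv]
    ring
  · have hpos : 0 < ∫ s in (-2:ℝ)..6, Real.exp (2 * p s) := by
      apply intervalIntegral.intervalIntegral_pos_of_pos
      · exact (Real.continuous_exp.comp (continuous_const.mul
          (hp.continuous))).intervalIntegrable _ _
      · exact fun x => Real.exp_pos _
      · norm_num
    rw [hint, div_self (by positivity)]
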